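/- Let I be a consistent Nelson interpretation (i.e., V⁺(w) ∩ V⁻(w) = ∅ for all worlds w) and φ₁, φ₂ any formulas. Then I ⊩⁺ (φ₁ ⇒ φ₂) if and only if I ⊩⁺ (φ₁ → φ₂), where φ₁ ⇒ φ₂ := (¬~φ₁ ∧ φ₁) → φ₂. -/

import Mathlib

inductive Formula (Atom : Type) : Type
  | bot : Formula Atom
  | atom : Atom → Formula Atom
  | sneg : Formula Atom → Formula Atom
  | conj : Formula Atom → Formula Atom → Formula Atom
  | disj : Formula Atom → Formula Atom → Formula Atom
  | impl : Formula Atom → Formula Atom → Formula Atom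

structure NelsonInterp (Atom : Type) where
  W : Type
  le : W → W → Prop
  refl : ∀ w, le w w
  trans : ∀ {w₁ w₂ w₃}, le w₁ w₂ → le w₂ w₃ → le w₁ w₃
  Vp : W → Set Atom
  Vm : W → Set Atom
  monoP : ∀ {w w'}, le w w' → Vp w ⊆ Vp w'
  monoM : ∀ {w w'}, le w w' → Vm w ⊆ Vm w'

mutual
  def forceP {Atom : Type} (I : NelsonInterp Atom) (w : I.W) : Formula Atom → Prop
    | .bot => False
    | .atom a => a ∈ I.Vp w
    | .sneg φ => forceM I w φ
    | .conj φ ψ => forceP I w φ ∧ forceP I w ψ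
    | .disj φ ψ => forceP I w φ ∨ forceP I w ψ
    | .impl φ ψ => ∀ w', I.le w w' → (¬ forceP I w' φ ∨ forceP I w' ψ)
  def forceM {Atom : Type} (I : NelsonInterp Atom) (w : I.W) : Formula Atom → Prop
    | .bot => True
    | .atom a => a ∈ I.Vm w
    | .sneg φ => forceP I w φ
    | .conj φ ψ => forceM I w φ ∨ forceM I w ψ
    | .disj φ ψ => forceM I w φ ∧ forceM I w ψ
    | .impl φ ψ => forceP I w φ ∧ forceM I w ψ
end

def Formula.neg {Atom : Type} (φ : Formula Atom) : Formula Atom := φ.impl .bot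

def Formula.supImp {Atom : Type} (φ ψ : Formula Atom) : Formula Atom :=
  ((φ.sneg.neg).conj φ).impl ψ

def Formula.attack {Atom : Type} (φ ψ : Formula Atom) : Formula Atom :=
  φ.supImp ψ.sneg

/-- cw-inference at a world: `I,w ⊨ φ` iff `I,w ⊩⁺ ¬~φ ∧ φ`. -/
def cw {Atom : Type} (I : NelsonInterp Atom) (w : I.W) (φ : Formula Atom) : Prop :=
  forceP I w ((φ.sneg.neg).conj φ)

/-- `I ⊩⁺ φ` : forcing at all worlds. -/
def forcedP {Atom : Type} (I : NelsonInterp Atom) (φ : Formula Atom) : Prop :=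
  ∀ w, forceP I w φ

def forcedM {Atom : Type} (I : NelsonInterp Atom) (φ : Formula Atom) : Prop :=
  ∀ w, forceM I w φ

/-- `I ⊨ φ` : cw-inference at all worlds. -/
def cwAll {Atom : Type} (I : NelsonInterp Atom) (φ : Formula Atom) : Prop :=
  ∀ w, cw I w φ

def NelsonInterp.Consistent {Atom : Type} (I : NelsonInterp Atom) : Prop :=
  ∀ w, I.Vp w ∩ I.Vm w = ∅

/-- An HT-interpretation: two worlds h ≤ t, given by four sets of atoms. -/
structure HTInterp (Atom : Type) where
  Hp : Set Atom
  Hm : Set Atom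
  Tp : Set Atom
  Tm : Set Atom
  subP : Hp ⊆ Tp
  subM : Hm ⊆ Tm

/-- The underlying Nelson interpretation: world `false` is h, world `true` is t. -/
def HTInterp.toNelson {Atom : Type} (I : HTInterp Atom) : NelsonInterp Atom where
  W := Bool
  le := (· ≤ ·)
  refl := le_refl
  trans := le_trans
  Vp := fun w => if w then I.Tp else I.Hp
  Vm := fun w => if w then I.Tm else I.Hm
  monoP := by
    intro w w' hle
    match w, w', hle with
    | false, false, _ => exact subset_rfl
    | false, true, _ => exact I.subP
    | true, true, _ => exact subset_rfl
    | true, false, h => exact absurd h (by decide)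
  monoM := by
    intro w w' hle
    match w, w', hle with
    | false, false, _ => exact subset_rfl
    | false, true, _ => exact I.subM
    | true, true, _ => exact subset_rfl
    | true, false, h => exact absurd h (by decide)

/-! Forcing persists upwards, so in a consistent interpretation `φ` at `w` rules out `~φ` at every
`w' ≥ w`, i.e. `φ` forces `¬~φ`. The guard `¬~φ` in `φ ⇒ ψ` is therefore redundant. -/

mutual
  theorem forceP_mono {Atom : Type} (I : NelsonInterp Atom) {w w' : I.W}
      (h : I.le w w') : ∀ φ, forceP I w φ → forceP I w' φ
    | .bot, hf => hf
    | .atom _, hf => I.monoP h hf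
    | .sneg φ, hf => forceM_mono I h φ hf
    | .conj φ ψ, hf => ⟨forceP_mono I h φ hf.1, forceP_mono I h ψ hf.2⟩
    | .disj φ ψ, hf => hf.imp (forceP_mono I h φ) (forceP_mono I h ψ)
    | .impl _ _, hf => fun _ h' => hf _ (I.trans h h')
  theorem forceM_mono {Atom : Type} (I : NelsonInterp Atom) {w w' : I.W}
      (h : I.le w w') : ∀ φ, forceM I w φ → forceM I w' φ
    | .bot, hf => hf
    | .atom _, hf => I.monoM h hf
    | .sneg φ, hf => forceP_mono I h φ hf
    | .conj φ ψ, hf => hf.imp (forceM_mono I h φ) (forceM_mono I h ψ)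
    | .disj φ ψ, hf => ⟨forceM_mono I h φ hf.1, forceM_mono I h ψ hf.2⟩
    | .impl φ ψ, hf => ⟨forceP_mono I h φ hf.1, forceM_mono I h ψ hf.2⟩
end

namespace NelsonInterp.Consistent

variable {Atom : Type} {I : NelsonInterp Atom}

theorem not_forceM_of_forceP (hI : I.Consistent) :
    ∀ (φ : Formula Atom) (w : I.W), forceP I w φ → ¬ forceM I w φ
  | .bot, _, hp, _ => hp
  | .atom a, w, hp, hm => (Set.eq_empty_iff_forall_notMem.mp (hI w)) a ⟨hp, hm⟩
  | .sneg φ, w, hp, hm => hI.not_forceM_of_forceP φ w hm hp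
  | .conj φ ψ, w, hp, hm =>
      hm.elim (hI.not_forceM_of_forceP φ w hp.1) (hI.not_forceM_of_forceP ψ w hp.2)
  | .disj φ ψ, w, hp, hm =>
      hp.elim (hI.not_forceM_of_forceP φ w · hm.1) (hI.not_forceM_of_forceP ψ w · hm.2)
  | .impl _ ψ, w, hp, hm =>
      (hp w (I.refl w)).elim (· hm.1) (hI.not_forceM_of_forceP ψ w · hm.2)

theorem forceP_neg_sneg_of_forceP (hI : I.Consistent) {w : I.W} {φ : Formula Atom}
    (h : forceP I w φ) : forceP I w φ.sneg.neg :=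
  fun _ hle => Or.inl (hI.not_forceM_of_forceP φ _ (forceP_mono I hle φ h))

theorem cw_iff_forceP (hI : I.Consistent) {w : I.W} {φ : Formula Atom} :
    cw I w φ ↔ forceP I w φ :=
  ⟨And.right, fun h => ⟨hI.forceP_neg_sneg_of_forceP h, h⟩⟩

theorem forceP_supImp_iff (hI : I.Consistent) {w : I.W} {φ ψ : Formula Atom} :
    forceP I w (φ.supImp ψ) ↔ forceP I w (φ.impl ψ) :=
  forall₂_congr fun _ _ => or_congr_left (not_congr hI.cw_iff_forceP)

end NelsonInterp.Consistent

theorem supImp_eq_impl_of_consistent {Atom : Type} (I : NelsonInterp Atom)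
    (hI : I.Consistent) (φ₁ φ₂ : Formula Atom) :
    forcedP I (φ₁.supImp φ₂) ↔ forcedP I (φ₁.impl φ₂) :=
  forall_congr' fun _ => hI.forceP_supImp_iff
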